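/- arXiv:2103.07749 — 2 statements merged into one kernel-verified Lean document; each statement's English description precedes it below -/
import Mathlib

section
/- Gilbert-Varshamov bound for the overweight distance: Let R be a finite ring with identity, n a positive integer, and d ∈ {1, ..., 2n}. Then there exists a code C ⊆ R^n whose minimum overweight distance is at least d and which satisfies |C| ≥ |R|^n / |B_{d-1,D}(0)|, where B_{d-1,D}(0) is the overweight ball of radius d-1 around 0 in R^n. -/
open Classical in
noncomputable def overweight {R : Type*} [Ring R] (x : R) : ℝ :=
  if x = 0 then 0 else if IsUnit x then 1 else 2

noncomputable def overweightN {R : Type*} [Ring R] {n : ℕ} (x : Fin n → R) : ℝ :=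
  ∑ i, overweight (x i)

noncomputable def owDist {R : Type*} [Ring R] {n : ℕ} (x y : Fin n → R) : ℝ :=
  overweightN (x - y)

def owBall {R : Type*} [Ring R] {n : ℕ} (r : ℝ) (x : Fin n → R) : Set (Fin n → R) :=
  {y : Fin n → R | owDist x y ≤ r}

/-! A code that is maximal among codes of minimum distance at least `d` covers `R^n` by the balls
of radius `d - 1` around its codewords: a word at distance `< d` from every codeword could be
added, and overweight distances are integers. Since `D` is translation invariant, these balls are
translates of `B_{d-1,D}(0)`, so `R^n = C + B_{d-1,D}(0)` and `|R|^n ≤ |C| · |B_{d-1,D}(0)|`. -/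

open Set Pointwise

theorem Set.exists_pairwise_forall_notMem_exists_not_rel {α : Type*} [Finite α]
    {r : α → α → Prop} (hr : ∀ x y, r x y → r y x) :
    ∃ C : Set α, C.Pairwise r ∧ ∀ z ∉ C, ∃ x ∈ C, ¬ r x z := by
  obtain ⟨C, -, hC⟩ := _root_.Finite.exists_le_maximal (p := fun s : Set α => s.Pairwise r)
    (pairwise_empty r)
  refine ⟨C, hC.prop, fun z hz => ?_⟩
  by_contra! h
  exact hz (hC.mem_of_prop_insert (hC.prop.insert fun x hx _ => ⟨hr x z (h x hx), h x hx⟩))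

theorem Set.natCard_le_ncard_mul_ncard_of_add_eq_univ {G : Type*} [AddGroup G] [Finite G]
    {C B : Set G} (h : C + B = univ) : Nat.card G ≤ C.ncard * B.ncard := by
  rw [← ncard_univ, ← h]
  exact natCard_add_le

section Overweight

variable {R : Type*} [Ring R] {n : ℕ}

theorem overweight_neg (a : R) : overweight (-a) = overweight a := by
  grind [overweight, IsUnit.neg_iff]

theorem owDist_comm (x y : Fin n → R) : owDist x y = owDist y x := by
  simp only [owDist, overweightN, ← neg_sub x y, Pi.neg_apply, overweight_neg]

theorem owDist_self (x : Fin n → R) : owDist x x = 0 := by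
  simp [owDist, overweightN, overweight]

theorem exists_natCast_eq_overweight (a : R) : ∃ k : ℕ, overweight a = k := by
  unfold overweight
  split_ifs
  exacts [⟨0, Nat.cast_zero.symm⟩, ⟨1, Nat.cast_one.symm⟩, ⟨2, Nat.cast_ofNat.symm⟩]

theorem exists_natCast_eq_owDist (x y : Fin n → R) : ∃ k : ℕ, owDist x y = k := by
  choose k hk using fun i => exists_natCast_eq_overweight ((x - y) i)
  exact ⟨∑ i, k i, by simp only [owDist, overweightN, hk, Nat.cast_sum]⟩

theorem owDist_le_sub_one_of_lt {x y : Fin n → R} {d : ℕ} (h : owDist x y < d) :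
    owDist x y ≤ d - 1 := by
  obtain ⟨k, hk⟩ := exists_natCast_eq_owDist x y
  rw [hk] at h ⊢
  have hkd : k + 1 ≤ d := by exact_mod_cast h
  rw [le_sub_iff_add_le]
  exact_mod_cast hkd

theorem sub_mem_owBall_zero_iff {x z : Fin n → R} {r : ℝ} :
    z - x ∈ owBall r 0 ↔ owDist x z ≤ r := by
  change overweightN (0 - (z - x)) ≤ r ↔ overweightN (x - z) ≤ r
  rw [zero_sub, neg_sub]

end Overweight

theorem gilbert_varshamov_overweight_general {R : Type*} [Ring R] [Fintype R]
    (n d : ℕ) (hd1 : 1 ≤ d) :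
    ∃ C : Set (Fin n → R),
      (∀ x ∈ C, ∀ y ∈ C, x ≠ y → (d : ℝ) ≤ owDist x y) ∧
      (C.ncard : ℝ) ≥ (Fintype.card R : ℝ) ^ n /
        ((owBall ((d : ℝ) - 1) (0 : Fin n → R)).ncard : ℝ) := by
  obtain ⟨C, hC, hmax⟩ := exists_pairwise_forall_notMem_exists_not_rel
    (r := fun x y : Fin n → R => (d : ℝ) ≤ owDist x y) fun x y h => h.trans_eq (owDist_comm x y)
  have hcover : C + owBall ((d : ℝ) - 1) 0 = univ := by
    refine eq_univ_of_forall fun z => ?_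
    by_cases hz : z ∈ C
    · refine ⟨z, hz, z - z, sub_mem_owBall_zero_iff.2 ?_, add_sub_cancel z z⟩
      rw [owDist_self, sub_nonneg]
      exact_mod_cast hd1
    · obtain ⟨x, hx, hxz⟩ := hmax z hz
      exact ⟨x, hx, z - x, sub_mem_owBall_zero_iff.2 (owDist_le_sub_one_of_lt (not_le.1 hxz)),
        add_sub_cancel x z⟩
  refine ⟨C, hC, div_le_of_le_mul₀ (by positivity) (by positivity) ?_⟩
  have hcount := natCard_le_ncard_mul_ncard_of_add_eq_univ hcover
  rw [Nat.card_fun, Nat.card_eq_fintype_card, Nat.card_fin] at hcount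
  exact_mod_cast hcount

/-- Gilbert–Varshamov bound for the overweight distance: for every `1 ≤ d ≤ 2n`
there is a code `C ⊆ R^n` of minimum overweight distance at least `d` with
`|C| ≥ |R|^n / |B_{d-1,D}(0)|`. -/
theorem gilbert_varshamov_overweight {R : Type*} [Ring R] [Fintype R]
    (n d : ℕ) (hn : 0 < n) (hd1 : 1 ≤ d) (hd2 : d ≤ 2 * n) :
    ∃ C : Set (Fin n → R),
      (∀ x ∈ C, ∀ y ∈ C, x ≠ y → (d : ℝ) ≤ owDist x y) ∧
      (C.ncard : ℝ) ≥ (Fintype.card R : ℝ) ^ n /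
        ((owBall ((d : ℝ) - 1) (0 : Fin n → R)).ncard : ℝ) :=
  gilbert_varshamov_overweight_general n d hd1
end

section
/- Let R be a finite local ring with maximal ideal J and assume |J| ≥ 2. Then W̄(J) ≥ W̄(I) for every left or right ideal I ⊆ R, where W̄ denotes the average overweight; i.e., among all one-sided ideals of R, the maximal ideal J maximizes the average overweight. -/
noncomputable def avgOverweight {R : Type*} [Ring R] [Fintype R] (A : Set R) : ℝ :=
  (∑ a ∈ A.toFinite.toFinset, overweight a) / (A.ncard : ℝ)

open Finset

theorem Set.eq_univ_of_isUnit_mem {M : Type*} [Monoid M] {I : Set M}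
    (hmul : (∀ r : M, ∀ x ∈ I, r * x ∈ I) ∨ (∀ r : M, ∀ x ∈ I, x * r ∈ I))
    {u : M} (hu : IsUnit u) (huI : u ∈ I) : I = Set.univ := by
  obtain ⟨v, rfl⟩ := hu
  refine Set.eq_univ_of_forall fun r => ?_
  rcases hmul with hleft | hright
  · simpa using hleft (r * ↑v⁻¹) _ huI
  · simpa using hright (↑v⁻¹ * r) _ huI

section Overweight

variable {R : Type*} [Ring R]

@[simp]
theorem overweight_zero : overweight (0 : R) = 0 := by
  simp [overweight]

theorem overweight_of_isUnit [Nontrivial R] {x : R} (hx : IsUnit x) : overweight x = 1 := by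
  simp [overweight, hx, hx.ne_zero]

theorem overweight_of_mem_nonunits {x : R} (hx : x ∈ nonunits R) (hx0 : x ≠ 0) :
    overweight x = 2 := by
  simp [overweight, hx0, mem_nonunits_iff.1 hx]

theorem sum_overweight_of_subset_nonunits {S : Finset R} (hS : ∀ a ∈ S, a ∈ nonunits R)
    (h0 : 0 ∈ S) : ∑ a ∈ S, overweight a = 2 * (#S : ℝ) - 2 := by
  classical
  rw [← sum_erase_add S _ h0, overweight_zero, add_zero,
    sum_congr rfl fun a ha =>
      overweight_of_mem_nonunits (hS a (mem_of_mem_erase ha)) (ne_of_mem_erase ha),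
    sum_const, card_erase_of_mem h0, nsmul_eq_mul, Nat.cast_pred (card_pos.2 ⟨0, h0⟩)]
  ring

variable [Fintype R]

theorem avgOverweight_of_subset_nonunits {S : Set R} (hS : S ⊆ nonunits R) (h0 : 0 ∈ S) :
    avgOverweight S = 2 - 2 / S.ncard := by
  have hpos : (0 : ℝ) < S.ncard := by
    exact_mod_cast (Set.ncard_pos S.toFinite).2 ⟨0, h0⟩
  rw [avgOverweight, sum_overweight_of_subset_nonunits (fun a ha => hS (by simpa using ha))
    (by simpa using h0), ← Set.ncard_eq_toFinset_card]
  field_simp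

theorem avgOverweight_le_of_subset_nonunits [Nontrivial R] {S : Set R} (hS : S ⊆ nonunits R)
    (h0 : 0 ∈ S) : avgOverweight S ≤ avgOverweight (nonunits R) := by
  rw [avgOverweight_of_subset_nonunits hS h0,
    avgOverweight_of_subset_nonunits le_rfl (zero_mem_nonunits.2 zero_ne_one)]
  have hpos : (0 : ℝ) < S.ncard := by
    exact_mod_cast (Set.ncard_pos S.toFinite).2 ⟨0, h0⟩
  have hle : (S.ncard : ℝ) ≤ (nonunits R).ncard := by
    exact_mod_cast Set.ncard_le_ncard hS
  gcongr

theorem sum_overweight_univ [Nontrivial R] :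
    ∑ a : R, overweight a = Fintype.card R + (nonunits R).ncard - 2 := by
  classical
  set J := (nonunits R).toFinset
  have hunits : ∀ a ∈ Jᶜ, overweight a = 1 := fun a ha =>
    overweight_of_isUnit (by simpa [J, mem_nonunits_iff] using ha)
  have hcard := card_add_card_compl J
  rw [← sum_add_sum_compl J, sum_congr rfl hunits,
    sum_overweight_of_subset_nonunits (fun a ha => by simpa [J] using ha)
      (by simp [J]), Set.ncard_eq_toFinset_card', ← hcard]
  simp only [sum_const, nsmul_eq_mul, mul_one, Nat.cast_add]
  ring

theorem avgOverweight_univ_le [Nontrivial R] (hJ : 2 ≤ (nonunits R).ncard) :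
    avgOverweight (Set.univ : Set R) ≤ avgOverweight (nonunits R) := by
  have hsum : ∑ a ∈ (Set.univ : Set R).toFinite.toFinset, overweight a =
      Fintype.card R + (nonunits R).ncard - 2 := by
    simpa using sum_overweight_univ
  rw [avgOverweight, hsum, Set.ncard_univ, Nat.card_eq_fintype_card,
    avgOverweight_of_subset_nonunits le_rfl (zero_mem_nonunits.2 zero_ne_one)]
  have hm : (2 : ℝ) ≤ (nonunits R).ncard := by exact_mod_cast hJ
  have hmn : ((nonunits R).ncard : ℝ) ≤ Fintype.card R := by
    exact_mod_cast (Set.ncard_le_ncard (Set.subset_univ (nonunits R))).trans_eq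
      ((Set.ncard_univ R).trans Nat.card_eq_fintype_card)
  have hn : (Fintype.card R : ℝ) ≠ 0 := by positivity
  calc ((Fintype.card R : ℝ) + (nonunits R).ncard - 2) / Fintype.card R
      = 1 + ((nonunits R).ncard - 2) / Fintype.card R := by field_simp; ring
    _ ≤ 1 + ((nonunits R).ncard - 2) / (nonunits R).ncard := by gcongr
    _ = 2 - 2 / (nonunits R).ncard := by field_simp; ring

end Overweight

theorem avgOverweight_maximalIdeal_max_general {R : Type*} [Ring R] [Fintype R]
    (hJ : 2 ≤ (nonunits R).ncard)
    (I : Set R) (h0 : (0 : R) ∈ I)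
    (hmul : (∀ r : R, ∀ x ∈ I, r * x ∈ I) ∨ (∀ r : R, ∀ x ∈ I, x * r ∈ I)) :
    avgOverweight I ≤ avgOverweight (nonunits R) := by
  have : Nontrivial R := by
    obtain ⟨a, b, -, -, hab⟩ := (Set.one_lt_ncard_iff).1 hJ
    exact nontrivial_of_ne a b hab
  by_cases hI : I ⊆ nonunits R
  · exact avgOverweight_le_of_subset_nonunits hI h0
  · obtain ⟨u, huI, hu⟩ := Set.not_subset.1 hI
    rw [Set.eq_univ_of_isUnit_mem hmul (not_not.1 hu) huI]
    exact avgOverweight_univ_le hJ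

/-- In a finite local ring `R` whose maximal ideal `J = nonunits R` has at least
two elements, the maximal ideal maximizes the average overweight among all left
or right ideals `I` of `R`. -/
theorem avgOverweight_maximalIdeal_max {R : Type*} [Ring R] [Fintype R]
    [IsLocalRing R] (hJ : 2 ≤ (nonunits R).ncard)
    (I : Set R) (h0 : (0 : R) ∈ I)
    (hadd : ∀ x ∈ I, ∀ y ∈ I, x + y ∈ I)
    (hmul : (∀ r : R, ∀ x ∈ I, r * x ∈ I) ∨ (∀ r : R, ∀ x ∈ I, x * r ∈ I)) :
    avgOverweight I ≤ avgOverweight (nonunits R) :=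
  avgOverweight_maximalIdeal_max_general hJ I h0 hmul
end
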